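/- (Uniform beliefs obstruction) Let q ∈ ℝ^S be a probability vector with all entries strictly positive, Q = q 1_{N_gR}^T, and V = Q(I - T_RR) where T_RR is nonnegative with column sums at most 1. Fix a receiving agent k with 1^T t_{RR,k} < 1 (i.e., k is connected to at least one sending agent). If k is not connected to sending sub-network s (so attainability requires V(s,k) = 0), then attainability fails, since V(s,k) = (1 - 1^T t_{RR,k}) q(s) > 0. -/

import Mathlib

namespace Matrix

variable {m n p α : Type*} [Fintype n]

theorem of_const_mul_apply [NonUnitalNonAssocSemiring α] (q : m → α) (A : Matrix n p α)
    (i : m) (k : p) :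
    ((of fun i (_ : n) => q i) * A) i k = q i * ∑ j, A j k := by
  simp only [mul_apply, of_apply, Finset.mul_sum]

theorem sum_one_sub_apply [DecidableEq n] [AddCommGroupWithOne α] (T : Matrix n n α) (k : n) :
    ∑ j, (1 - T) j k = 1 - ∑ j, T j k := by
  simp [Finset.sum_sub_distrib, one_apply]

end Matrix

open Matrix in
theorem stmt12_general {S NgR : ℕ}
    (T_RR : Matrix (Fin NgR) (Fin NgR) ℝ)
    (q : Fin S → ℝ) (hqpos : ∀ s, 0 < q s)
    (k : Fin NgR) (hk : ∑ j, T_RR j k < 1) (s : Fin S) :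
    (((Matrix.of fun (s' : Fin S) (_ : Fin NgR) => q s') * (1 - T_RR) : Matrix (Fin S) (Fin NgR) ℝ)) s k =
        (1 - ∑ j, T_RR j k) * q s ∧
    0 < (((Matrix.of fun (s' : Fin S) (_ : Fin NgR) => q s') * (1 - T_RR) : Matrix (Fin S) (Fin NgR) ℝ)) s k := by
  have hentry : ((of fun (s' : Fin S) (_ : Fin NgR) => q s') * (1 - T_RR) :
      Matrix (Fin S) (Fin NgR) ℝ) s k =
      (1 - ∑ j, T_RR j k) * q s := by
    rw [of_const_mul_apply, sum_one_sub_apply, mul_comm]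
  exact ⟨hentry, hentry ▸ mul_pos (sub_pos.2 hk) (hqpos s)⟩

open Matrix in
theorem stmt12 {S NgR : ℕ}
    (T_RR : Matrix (Fin NgR) (Fin NgR) ℝ)
    (hRRnn : ∀ i j, 0 ≤ T_RR i j)
    (hcol : ∀ j, ∑ i, T_RR i j ≤ 1)
    (q : Fin S → ℝ) (hqpos : ∀ s, 0 < q s) (hq1 : ∑ s, q s = 1)
    (k : Fin NgR) (hk : ∑ j, T_RR j k < 1) (s : Fin S) :
    (((Matrix.of fun (s' : Fin S) (_ : Fin NgR) => q s') * (1 - T_RR) : Matrix (Fin S) (Fin NgR) ℝ)) s k =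
        (1 - ∑ j, T_RR j k) * q s ∧
    0 < (((Matrix.of fun (s' : Fin S) (_ : Fin NgR) => q s') * (1 - T_RR) : Matrix (Fin S) (Fin NgR) ℝ)) s k :=
  stmt12_general T_RR q hqpos k hk s
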